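/- Let (Ω, 𝓕, P) be a probability space, 𝒢 ⊆ 𝓕 a sub-σ-algebra, M : Ω → ℝ a 𝒢-measurable random variable, and Z : Ω → ℝ a random variable independent of 𝒢 with Gaussian law of mean 0 and variance v > 0. Set Y = M + Z. Then the regular conditional distribution of Y given 𝒢 has the Gaussian density y ↦ (2πv)^{−1/2}·exp(−(M − y)²/(2v)) with respect to Lebesgue measure: for every bounded Borel function g : ℝ → ℝ, almost surely E[g(Y) | 𝒢] = ∫_ℝ g(y)·(2πv)^{−1/2}·exp(−(M − y)²/(2v)) dy. -/

import Mathlib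

/-!
Freezing: since `M` is `𝒢`-measurable and `Z` is independent of `𝒢`, conditioning on `𝒢` amounts
to fixing `M = m` and integrating `g (m + z)` against the law of `Z`. Independence makes the joint
law of `((M, 1_s), Z)` a product measure for each `s ∈ 𝒢`, so the defining identity of the
conditional expectation is Fubini. Translating `N(0, v)` by `m` gives `N(m, v)`, whose density is
the Gaussian kernel of the statement.
-/

open MeasureTheory ProbabilityTheory Filter
open scoped NNReal

namespace ProbabilityTheory

section Freezing

variable {Ω β γ E : Type*} {𝒢 mΩ : MeasurableSpace Ω} {μ : Measure Ω}
  {mβ : MeasurableSpace β} {mγ : MeasurableSpace γ} [NormedAddCommGroup E]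
  {X : Ω → β} {Z : Ω → γ} {F : β × γ → E}

lemma IndepFun.integrable_prod_map_map [IsFiniteMeasure μ] (hXZ : IndepFun X Z μ)
    (hX : Measurable X) (hZ : Measurable Z) (hF : StronglyMeasurable F)
    (hFint : Integrable (fun ω => F (X ω, Z ω)) μ) :
    Integrable F ((μ.map X).prod (μ.map Z)) := by
  rw [← (indepFun_iff_map_prod_eq_prod_map_map hX.aemeasurable hZ.aemeasurable).1 hXZ,
    integrable_map_measure hF.aestronglyMeasurable (hX.prodMk hZ).aemeasurable]
  exact hFint

variable [NormedSpace ℝ E]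

lemma IndepFun.integrable_integral_comp_prod [IsFiniteMeasure μ] (hXZ : IndepFun X Z μ)
    (hX : Measurable X) (hZ : Measurable Z) (hF : StronglyMeasurable F)
    (hFint : Integrable (fun ω => F (X ω, Z ω)) μ) :
    Integrable (fun ω => ∫ z, F (X ω, z) ∂(μ.map Z)) μ := by
  exact (integrable_map_measure hF.integral_prod_right'.aestronglyMeasurable hX.aemeasurable).1
    (hXZ.integrable_prod_map_map hX hZ hF hFint).integral_prod_left

lemma IndepFun.integral_comp_prod [IsFiniteMeasure μ] (hXZ : IndepFun X Z μ)
    (hX : Measurable X) (hZ : Measurable Z) (hF : StronglyMeasurable F)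
    (hFint : Integrable (fun ω => F (X ω, Z ω)) μ) :
    ∫ ω, F (X ω, Z ω) ∂μ = ∫ ω, ∫ z, F (X ω, z) ∂(μ.map Z) ∂μ := by
  calc ∫ ω, F (X ω, Z ω) ∂μ
      = ∫ p, F p ∂(μ.map fun ω => (X ω, Z ω)) :=
        (integral_map (hX.prodMk hZ).aemeasurable hF.aestronglyMeasurable).symm
    _ = ∫ p, F p ∂((μ.map X).prod (μ.map Z)) := by
        rw [(indepFun_iff_map_prod_eq_prod_map_map hX.aemeasurable hZ.aemeasurable).1 hXZ]
    _ = ∫ x, ∫ z, F (x, z) ∂(μ.map Z) ∂(μ.map X) :=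
        integral_prod F (hXZ.integrable_prod_map_map hX hZ hF hFint)
    _ = ∫ ω, ∫ z, F (X ω, z) ∂(μ.map Z) ∂μ :=
        integral_map hX.aemeasurable hF.integral_prod_right'.aestronglyMeasurable

variable [CompleteSpace E]

theorem condExp_comp_prod_ae_eq_integral_of_indep [IsFiniteMeasure μ] (h𝒢 : 𝒢 ≤ mΩ)
    (hX : Measurable[𝒢] X) (hZ : Measurable Z)
    (hindep : Indep (MeasurableSpace.comap Z mγ) 𝒢 μ) (hF : StronglyMeasurable F)
    (hFint : Integrable (fun ω => F (X ω, Z ω)) μ) :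
    μ[fun ω => F (X ω, Z ω) | 𝒢] =ᵐ[μ] fun ω => ∫ z, F (X ω, z) ∂(μ.map Z) := by
  have hXZ : IndepFun X Z μ := by
    rw [IndepFun_iff_Indep]
    exact indep_of_indep_of_le_left hindep.symm hX.comap_le
  refine (ae_eq_condExp_of_forall_setIntegral_eq h𝒢 hFint
    (fun s _ _ => (hXZ.integrable_integral_comp_prod (hX.mono h𝒢 le_rfl) hZ hF hFint).integrableOn)
    ?_ (hF.integral_prod_right'.comp_measurable hX).aestronglyMeasurable).symm
  intro s hs _
  set Xs : Ω → β × ℝ := fun ω => (X ω, s.indicator 1 ω)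
  have hXs : Measurable[𝒢] Xs := hX.prodMk (measurable_const.indicator hs)
  have hXsZ : IndepFun Xs Z μ := by
    rw [IndepFun_iff_Indep]
    exact indep_of_indep_of_le_left hindep.symm hXs.comap_le
  have hG : StronglyMeasurable fun p : (β × ℝ) × γ => p.1.2 • F (p.1.1, p.2) :=
    (measurable_snd.comp measurable_fst).stronglyMeasurable.smul
      (hF.comp_measurable ((measurable_fst.comp measurable_fst).prodMk measurable_snd))
  have hind (f : Ω → E) : (fun ω => s.indicator (1 : Ω → ℝ) ω • f ω) = s.indicator f := by
    ext ω
    by_cases h : ω ∈ s <;> simp [h]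
  have hGint : Integrable (fun ω => (Xs ω).2 • F ((Xs ω).1, Z ω)) μ := by
    simpa only [Xs, hind] using hFint.indicator (h𝒢 s hs)
  have key := hXsZ.integral_comp_prod (hXs.mono h𝒢 le_rfl) hZ hG hGint
  simp only [Xs, integral_smul, hind, integral_indicator (h𝒢 s hs)] at key
  exact key.symm

end Freezing

lemma integral_comp_const_add_gaussianReal {E : Type*} [NormedAddCommGroup E] [NormedSpace ℝ E]
    (f : ℝ → E) (m : ℝ) {v : ℝ≥0} (hv : v ≠ 0) :
    ∫ z, f (m + z) ∂gaussianReal 0 v = ∫ y, gaussianPDFReal m v y • f y := by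
  have hmap : (gaussianReal 0 v).map (m + ·) = gaussianReal m v := by
    rw [gaussianReal_map_const_add, zero_add]
  rw [← integral_gaussianReal_eq_integral_smul hv, ← hmap,
    (measurableEmbedding_addLeft m).integral_map]

end ProbabilityTheory

/-- If `M` is `𝒢`-measurable and `Z` is independent of `𝒢` with Gaussian law
`N(0, v)`, `v > 0`, then the regular conditional distribution of `Y = M + Z` given `𝒢` has the
Gaussian density `y ↦ (2πv)^{-1/2} exp(-(M - y)²/(2v))`: for every bounded Borel `g`,
`E[g(Y) | 𝒢] = ∫ g(y) (2πv)^{-1/2} exp(-(M - y)²/(2v)) dy` a.s. -/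
theorem conditional_gaussian_density
    {Ω : Type*} [mΩ : MeasurableSpace Ω]
    (P : Measure Ω) [IsProbabilityMeasure P]
    (𝒢 : MeasurableSpace Ω) (h𝒢 : 𝒢 ≤ mΩ)
    (M Z : Ω → ℝ) (hM : Measurable[𝒢] M) (hZ : Measurable[mΩ] Z)
    (v : ℝ) (hv : 0 < v)
    (hZlaw : @Measure.map Ω ℝ mΩ _ Z P = gaussianReal 0 (Real.toNNReal v))
    (hindep : @Indep Ω (MeasurableSpace.comap Z inferInstance) 𝒢 mΩ P)
    (g : ℝ → ℝ) (hg : Measurable g) (hgbdd : ∃ C : ℝ, ∀ x, |g x| ≤ C) :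
    P[fun ω => g (M ω + Z ω)|𝒢] =ᵐ[P]
      fun ω => ∫ y : ℝ, g y * (Real.sqrt (2 * Real.pi * v))⁻¹ *
        Real.exp (-(M ω - y) ^ 2 / (2 * v)) := by
  obtain ⟨C, hC⟩ := hgbdd
  have hgY : Integrable (fun ω => g (M ω + Z ω)) P :=
    .of_bound (hg.comp ((hM.mono h𝒢 le_rfl).add hZ)).aestronglyMeasurable C
      (ae_of_all _ fun ω => hC _)
  have hv' : v.toNNReal ≠ 0 := by simpa using hv
  filter_upwards [condExp_comp_prod_ae_eq_integral_of_indep (F := fun p : ℝ × ℝ => g (p.1 + p.2))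
    h𝒢 hM hZ hindep (hg.comp (measurable_fst.add measurable_snd)).stronglyMeasurable hgY]
    with ω hω
  rw [hω, hZlaw, integral_comp_const_add_gaussianReal _ _ hv']
  refine integral_congr_ae (ae_of_all _ fun y => ?_)
  simp only [gaussianPDFReal, Real.coe_toNNReal v hv.le, smul_eq_mul, sub_sq_comm y]
  ring
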